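/- Let F̂(η) = (1/t) log f(w_{t,η}) be the log-transformed meta objective and let η* ∈ [1/L, 1/α] be its unique stationary point on [0,∞). Then for every M̂ ≥ 2/α and every ε with 0 < ε < 1/L, and for every η ∈ [0, η* − ε] ∪ [η* + ε, M̂], one has |F̂'(η)| ≥ 2ε c_min² min(α³/L, 1/M̂²). -/

import Mathlib

/-!
Write `G(η) = f(w_{t,η})` and `N(η) = ∑ c_i² λ_i² (1 - ηλ_i)^{2t-1}`, so that `G' = -t N` and
`F̂' = -N / G`; the stationarity of `η*` means `N(η*) = 0`. Since odd powers are increasing,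
every summand of `N` decreases in `η`, and a step-size gap of `ε` makes the `i`-th summand drop
by at least `κ c_i² λ_i (1 - ηλ_i)^{2t}` at either end of the gap. Summing over `i` gives
`|N(η)| = |N(η) - N(η*)| ≥ 2κ G(η)`. The admissible `κ` comes from bounding `|1 - ηλ_i|` by `1`
where it is nonnegative and by `M̂ λ_i` where it is negative.
-/

open Set

lemma sub_mul_pow_le_pow_succ_sub_pow_succ_of_nonneg {u v x : ℝ} (k : ℕ) (hv : 0 ≤ v)
    (hx : x ∈ Icc v u) : (u - v) * x ^ k ≤ u ^ (k + 1) - v ^ (k + 1) := by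
  have hvu : v ≤ u := hx.1.trans hx.2
  have hxu : x ^ k ≤ u ^ k := pow_le_pow_left₀ (hv.trans hx.1) hx.2 k
  have hvk : v ^ k ≤ u ^ k := pow_le_pow_left₀ hv hvu k
  calc (u - v) * x ^ k ≤ (u - v) * u ^ k := mul_le_mul_of_nonneg_left hxu (sub_nonneg.2 hvu)
    _ ≤ (u - v) * u ^ k + v * (u ^ k - v ^ k) :=
        le_add_of_nonneg_right (mul_nonneg hv (sub_nonneg.2 hvk))
    _ = u ^ (k + 1) - v ^ (k + 1) := by ring

lemma sub_mul_pow_le_pow_succ_sub_pow_succ {u v x : ℝ} {k : ℕ} (hk : Even k)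
    (hx : x ∈ Icc v u) (hsign : 0 ≤ v ∨ u ≤ 0) :
    (u - v) * x ^ k ≤ u ^ (k + 1) - v ^ (k + 1) := by
  rcases hsign with hv | hu
  · exact sub_mul_pow_le_pow_succ_sub_pow_succ_of_nonneg k hv hx
  · have h := sub_mul_pow_le_pow_succ_sub_pow_succ_of_nonneg (u := -v) (v := -u) (x := -x) k
      (neg_nonneg.2 hu) ⟨neg_le_neg hx.2, neg_le_neg hx.1⟩
    rw [hk.neg_pow, (hk.add_one).neg_pow, (hk.add_one).neg_pow] at h
    linarith

lemma abs_pow_succ_le_pow_succ_sub_pow_succ {u v x : ℝ} {k : ℕ} (hk : Even k)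
    (hx : x ∈ Icc v u) (hv : v ≤ 0) (hu : 0 ≤ u) :
    |x| ^ (k + 1) ≤ u ^ (k + 1) - v ^ (k + 1) := by
  have hvk : v ^ (k + 1) ≤ 0 := hk.add_one.pow_nonpos hv
  have huk : 0 ≤ u ^ (k + 1) := pow_nonneg hu _
  rcases le_total 0 x with h0 | h0
  · rw [abs_of_nonneg h0]
    linarith [pow_le_pow_left₀ h0 hx.2 (k + 1)]
  · rw [abs_of_nonpos h0]
    have := pow_le_pow_left₀ (neg_nonneg.2 h0) (neg_le_neg hx.1) (k + 1)
    rw [hk.add_one.neg_pow, hk.add_one.neg_pow] at this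
    rw [hk.add_one.neg_pow]
    linarith

lemma mul_pow_le_mul_pow_succ_sub_pow_succ {κ ε lam u v x : ℝ} {k : ℕ} (hk : Even k)
    (hlam : 0 ≤ lam) (hx : x ∈ Icc v u) (hgap : ε * lam ≤ u - v)
    (hsq : κ * x ^ 2 ≤ ε * lam ^ 2) (habs : κ * |x| ≤ lam) :
    κ * x ^ (k + 2) ≤ lam * (u ^ (k + 1) - v ^ (k + 1)) := by
  by_cases hsign : 0 ≤ v ∨ u ≤ 0
  · have hxk : 0 ≤ x ^ k := hk.pow_nonneg x
    calc κ * x ^ (k + 2) = κ * x ^ 2 * x ^ k := by ring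
      _ ≤ ε * lam ^ 2 * x ^ k := mul_le_mul_of_nonneg_right hsq hxk
      _ = lam * (ε * lam * x ^ k) := by ring
      _ ≤ lam * ((u - v) * x ^ k) :=
          mul_le_mul_of_nonneg_left (mul_le_mul_of_nonneg_right hgap hxk) hlam
      _ ≤ lam * (u ^ (k + 1) - v ^ (k + 1)) :=
          mul_le_mul_of_nonneg_left (sub_mul_pow_le_pow_succ_sub_pow_succ hk hx hsign) hlam
  · rw [not_or, not_le, not_le] at hsign
    calc κ * x ^ (k + 2) = κ * |x| * |x| ^ (k + 1) := by
          rw [← (hk.add (even_two)).pow_abs]; ring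
      _ ≤ lam * |x| ^ (k + 1) := mul_le_mul_of_nonneg_right habs (by positivity)
      _ ≤ lam * (u ^ (k + 1) - v ^ (k + 1)) := mul_le_mul_of_nonneg_left
          (abs_pow_succ_le_pow_succ_sub_pow_succ hk hx hsign.1.le hsign.2.le) hlam

lemma mul_sq_one_sub_mul_le {κ ε lam η M : ℝ} (hκ : 0 ≤ κ) (hlam : 0 ≤ lam)
    (hη : η ∈ Icc 0 M) (hκlam : κ ≤ ε * lam ^ 2) (hκM : κ * M ^ 2 ≤ ε) :
    κ * (1 - η * lam) ^ 2 ≤ ε * lam ^ 2 := by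
  have hηlam : η * lam ≤ M * lam := mul_le_mul_of_nonneg_right hη.2 hlam
  rcases le_total 0 (1 - η * lam) with hx | hx
  · have : (1 - η * lam) ^ 2 ≤ 1 := pow_le_one₀ hx (by nlinarith [mul_nonneg hη.1 hlam])
    nlinarith
  · have : (1 - η * lam) ^ 2 ≤ (M * lam) ^ 2 := by nlinarith
    nlinarith

lemma mul_abs_one_sub_mul_le {κ lam η M : ℝ} (hκ : 0 ≤ κ) (hlam : 0 ≤ lam)
    (hη : η ∈ Icc 0 M) (hκlam : κ ≤ lam) (hκM : κ * M ≤ 1) :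
    κ * |1 - η * lam| ≤ lam := by
  have hηlam : η * lam ≤ M * lam := mul_le_mul_of_nonneg_right hη.2 hlam
  rcases le_total 0 (1 - η * lam) with hx | hx
  · rw [abs_of_nonneg hx]; nlinarith [mul_nonneg hη.1 hlam]
  · rw [abs_of_nonpos hx]; nlinarith

noncomputable section GradientDescent

variable {ι : Type*} [Fintype ι] (c lam : ι → ℝ) (t : ℕ)

/-- `f(w_{t,η})` written in the eigenbasis of `H`: `c i = ⟨w₀, u_i⟩`, `lam i = λ_i`. -/
def gdLoss (η : ℝ) : ℝ := (1 / 2) * ∑ i, c i ^ 2 * lam i * (1 - η * lam i) ^ (2 * t)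

def gdLossSlope (η : ℝ) : ℝ := ∑ i, c i ^ 2 * lam i ^ 2 * (1 - η * lam i) ^ (2 * t - 1)

lemma hasDerivAt_gdLoss (η : ℝ) :
    HasDerivAt (gdLoss c lam t) (-t * gdLossSlope c lam t η) η := by
  have h : HasDerivAt (fun y => ∑ i, c i ^ 2 * lam i * (1 - y * lam i) ^ (2 * t))
      (∑ i, c i ^ 2 * lam i * (((2 * t : ℕ) : ℝ) * (1 - η * lam i) ^ (2 * t - 1) * -lam i)) η :=
    HasDerivAt.fun_sum fun i _ => by
      have hbase : HasDerivAt (fun y => 1 - y * lam i) (-lam i) η := by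
        simpa using ((hasDerivAt_id η).mul_const (lam i)).const_sub 1
      exact (hbase.pow (2 * t)).const_mul _
  refine (h.const_mul (1 / 2 : ℝ)).congr_deriv ?_
  simp only [gdLossSlope, Finset.mul_sum]
  refine Finset.sum_congr rfl fun i _ => ?_
  push_cast
  ring

lemma deriv_log_gdLoss (ht : t ≠ 0) {η : ℝ} (hη : gdLoss c lam t η ≠ 0) :
    deriv (fun y => (1 / (t : ℝ)) * Real.log (gdLoss c lam t y)) η =
      -gdLossSlope c lam t η / gdLoss c lam t η := by
  rw [(((hasDerivAt_gdLoss c lam t η).log hη).const_mul _).deriv]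
  field_simp

lemma gdLoss_pos (hlam : ∀ i, 0 < lam i) {i j : ι} (hci : c i ≠ 0) (hcj : c j ≠ 0)
    (hij : lam i ≠ lam j) (η : ℝ) : 0 < gdLoss c lam t η := by
  have hterm : ∀ k, 0 ≤ c k ^ 2 * lam k * (1 - η * lam k) ^ (2 * t) := fun k =>
    mul_nonneg (mul_nonneg (sq_nonneg _) (hlam k).le) ((even_two_mul t).pow_nonneg _)
  have hpos : ∀ k, c k ≠ 0 → 1 - η * lam k ≠ 0 →
      0 < c k ^ 2 * lam k * (1 - η * lam k) ^ (2 * t) := fun k hck hk =>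
    mul_pos (mul_pos (even_two.pow_pos hck) (hlam k)) ((even_two_mul t).pow_pos hk)
  have : ∃ k ∈ Finset.univ, 0 < c k ^ 2 * lam k * (1 - η * lam k) ^ (2 * t) := by
    by_cases hi : 1 - η * lam i = 0
    · refine ⟨j, Finset.mem_univ _, hpos j hcj fun hj => hij ?_⟩
      have hη : η ≠ 0 := by rintro rfl; simp at hi
      exact mul_left_cancel₀ hη (by linarith)
    · exact ⟨i, Finset.mem_univ _, hpos i hci hi⟩
  unfold gdLoss
  exact mul_pos one_half_pos (Finset.sum_pos' (fun k _ => hterm k) this)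

lemma two_mul_mul_gdLoss_le_gdLossSlope_sub (ht : 1 ≤ t) (hlam : ∀ i, 0 ≤ lam i)
    {κ ε p q η : ℝ} (hpq : p + ε ≤ q) (hη : η ∈ Icc p q)
    (hsq : ∀ i, κ * (1 - η * lam i) ^ 2 ≤ ε * lam i ^ 2)
    (habs : ∀ i, κ * |1 - η * lam i| ≤ lam i) :
    2 * κ * gdLoss c lam t η ≤ gdLossSlope c lam t p - gdLossSlope c lam t q := by
  obtain ⟨k, rfl⟩ : ∃ k, t = k + 1 := ⟨t - 1, by omega⟩
  have h2 : 2 * (k + 1) = 2 * k + 2 := by ring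
  have h1 : 2 * k + 2 - 1 = 2 * k + 1 := rfl
  simp only [gdLoss, gdLossSlope, h2, h1, Finset.mul_sum, ← Finset.sum_sub_distrib]
  refine Finset.sum_le_sum fun i _ => ?_
  have hx : 1 - η * lam i ∈ Icc (1 - q * lam i) (1 - p * lam i) :=
    ⟨by nlinarith [hlam i, hη.2], by nlinarith [hlam i, hη.1]⟩
  have := mul_pow_le_mul_pow_succ_sub_pow_succ (even_two_mul k) (hlam i) hx
    (by nlinarith [hlam i]) (hsq i) (habs i)
  have := mul_le_mul_of_nonneg_left this (mul_nonneg (sq_nonneg (c i)) (hlam i))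
  linarith
lemma two_mul_mul_gdLoss_le_abs_gdLossSlope (ht : 1 ≤ t) (hlam : ∀ i, 0 ≤ lam i)
    {κ ε ηstar η : ℝ} (hε : 0 ≤ ε) (hstar : gdLossSlope c lam t ηstar = 0)
    (hη : η + ε ≤ ηstar ∨ ηstar + ε ≤ η)
    (hsq : ∀ i, κ * (1 - η * lam i) ^ 2 ≤ ε * lam i ^ 2)
    (habs : ∀ i, κ * |1 - η * lam i| ≤ lam i) :
    2 * κ * gdLoss c lam t η ≤ |gdLossSlope c lam t η| := by
  rcases hη with h | h
  · have := two_mul_mul_gdLoss_le_gdLossSlope_sub c lam t ht hlam h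
      (left_mem_Icc.2 (by linarith)) hsq habs
    rw [hstar, sub_zero] at this
    exact this.trans (le_abs_self _)
  · have := two_mul_mul_gdLoss_le_gdLossSlope_sub c lam t ht hlam h
      (right_mem_Icc.2 (by linarith)) hsq habs
    rw [hstar, zero_sub] at this
    exact this.trans (neg_le_abs _)

end GradientDescent

lemma step_constant_bounds {α L M ε s κ : ℝ} (hα : 0 < α) (hαL : α < L) (hM : 2 / α ≤ M)
    (hε : 0 < ε) (hεL : ε < 1 / L) (hs : s ∈ Icc 0 1)
    (hκ : κ = ε * s * min (α ^ 3 / L) (1 / M ^ 2)) :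
    0 ≤ κ ∧ κ ≤ ε * α ^ 2 ∧ κ * M ^ 2 ≤ ε ∧ κ ≤ α ∧ κ * M ≤ 1 := by
  have hL : 0 < L := hα.trans hαL
  have hM0 : 0 < M := (by positivity : (0 : ℝ) < 2 / α).trans_le hM
  have hαM : 2 ≤ α * M := by rwa [div_le_iff₀ hα, mul_comm] at hM
  have hεα : ε * α ≤ 1 := by
    rw [lt_div_iff₀ hL] at hεL
    nlinarith
  have hm0 : 0 ≤ min (α ^ 3 / L) (1 / M ^ 2) := le_min (by positivity) (by positivity)
  have hmα : min (α ^ 3 / L) (1 / M ^ 2) ≤ α ^ 2 :=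
    (min_le_left _ _).trans (by rw [div_le_iff₀ hL]; nlinarith)
  have hmM : min (α ^ 3 / L) (1 / M ^ 2) * M ^ 2 ≤ 1 := by
    have := mul_le_mul_of_nonneg_right (min_le_right (α ^ 3 / L) (1 / M ^ 2)) (sq_nonneg M)
    rwa [one_div_mul_cancel (by positivity)] at this
  have hκm : κ ≤ ε * min (α ^ 3 / L) (1 / M ^ 2) := by
    rw [hκ, mul_right_comm]
    exact mul_le_of_le_one_right (by positivity) hs.2
  have hκ0 : 0 ≤ κ := hκ ▸ mul_nonneg (mul_nonneg hε.le hs.1) hm0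
  have hκα : κ ≤ ε * α ^ 2 := hκm.trans (mul_le_mul_of_nonneg_left hmα hε.le)
  have hκM : κ * M ^ 2 ≤ ε := by nlinarith
  refine ⟨hκ0, hκα, hκM, by nlinarith, by nlinarith⟩

/-- For the log-transformed meta objective `F̂(η) = (1/t) log f(w_{t,η})`
with unique stationary point `η* ∈ [1/L, 1/α]` on `[0,∞)`: for every `M̂ ≥ 2/α` and every
`0 < ε < 1/L`, and every `η ∈ [0, η* − ε] ∪ [η* + ε, M̂]`, one has
`|F̂'(η)| ≥ 2ε c_min² min(α³/L, 1/M̂²)`. -/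
theorem stmt4 (d t : ℕ) (hd : 2 ≤ d) (ht : 1 ≤ t)
    (lam c : Fin d → ℝ)
    (hpos : ∀ i, 0 < lam i)
    (hdec : ∀ i j : Fin d, i ≤ j → lam j ≤ lam i)
    (L α : ℝ)
    (hLdef : L = lam ⟨0, by omega⟩)
    (hadef : α = lam ⟨d - 1, by omega⟩)
    (hgap : α < L)
    (hcnorm : ∑ i, c i ^ 2 = 1)
    (cmin : ℝ)
    (hcmindef : cmin = min |c ⟨0, by omega⟩| |c ⟨d - 1, by omega⟩|)
    (hcmin : 0 < cmin)
    (F : ℝ → ℝ)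
    (hF : ∀ η : ℝ,
      F η = (1 / (t : ℝ)) *
        Real.log ((1 / 2) * ∑ i, c i ^ 2 * lam i * (1 - η * lam i) ^ (2 * t)))
    (ηstar : ℝ)
    (hηstar_range : 1 / L ≤ ηstar ∧ ηstar ≤ 1 / α)
    (hηstar_stat : deriv F ηstar = 0) :
    ∀ M ε : ℝ, 2 / α ≤ M → 0 < ε → ε < 1 / L →
      ∀ η : ℝ, η ∈ Set.Icc 0 (ηstar - ε) ∪ Set.Icc (ηstar + ε) M →
        2 * ε * cmin ^ 2 * min (α ^ 3 / L) (1 / M ^ 2) ≤ |deriv F η| := by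
  obtain ⟨hηs1, hηs2⟩ := hηstar_range
  have hα : 0 < α := hadef ▸ hpos _
  have hαlam : ∀ i, α ≤ lam i := fun i => hadef ▸ hdec _ _ (Nat.le_sub_one_of_lt i.isLt)
  have hc0 : cmin ≤ |c ⟨0, by omega⟩| := hcmindef ▸ min_le_left _ _
  have hcd : cmin ≤ |c ⟨d - 1, by omega⟩| := hcmindef ▸ min_le_right _ _
  have hG : ∀ η, 0 < gdLoss c lam t η :=
    gdLoss_pos c lam t hpos (abs_pos.1 (hcmin.trans_le hc0)) (abs_pos.1 (hcmin.trans_le hcd))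
      (by rw [← hLdef, ← hadef]; exact hgap.ne')
  have hF' : ∀ η, deriv F η = -gdLossSlope c lam t η / gdLoss c lam t η := fun η => by
    rw [show F = _ from funext hF]
    exact deriv_log_gdLoss c lam t (by omega) (hG η).ne'
  have hNstar : gdLossSlope c lam t ηstar = 0 := by simpa [hF', (hG _).ne'] using hηstar_stat
  intro M ε hM hε hεL η hη
  have hcmin1 : cmin ^ 2 ≤ 1 := hcnorm ▸ (pow_le_pow_left₀ hcmin.le hc0 2).trans
    ((sq_abs _).trans_le (Finset.single_le_sum (fun i _ => sq_nonneg (c i)) (Finset.mem_univ _)))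
  set κ := ε * cmin ^ 2 * min (α ^ 3 / L) (1 / M ^ 2) with hκ
  obtain ⟨hκ0, hκεα, hκM2, hκα, hκM⟩ :=
    step_constant_bounds hα hgap hM hε hεL ⟨sq_nonneg cmin, hcmin1⟩ hκ
  have hηM : η ∈ Icc 0 M := by
    have := one_div_pos.2 (hα.trans hgap)
    have := (div_le_div_of_nonneg_right one_le_two hα.le).trans hM
    rcases hη with ⟨h0, h1⟩ | ⟨h0, h1⟩ <;> constructor <;> linarith
  have hslope : 2 * κ * gdLoss c lam t η ≤ |gdLossSlope c lam t η| :=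
    two_mul_mul_gdLoss_le_abs_gdLossSlope c lam t ht (fun i => (hpos i).le) hε.le hNstar
      (hη.imp (fun h => by linarith [h.2]) (fun h => by linarith [h.1]))
      (fun i => mul_sq_one_sub_mul_le hκ0 (hpos i).le hηM
        (hκεα.trans (by gcongr; exact hαlam i)) hκM2)
      (fun i => mul_abs_one_sub_mul_le hκ0 (hpos i).le hηM (hκα.trans (hαlam i)) hκM)
  rw [hF', abs_div, abs_neg, abs_of_pos (hG η), le_div_iff₀ (hG η)]
  linear_combination hslope
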